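/- arXiv:1708.09067 — 3 statements merged into one kernel-verified Lean document; each statement's English description precedes it below -/
import Mathlib

section
/- Let K be a field, κ, n₀ ∈ ℕ with n₀ > 2κ, and F, G, H, U, V ∈ K[[X]][Y] with H monic in Y, such that F ≡ G·H mod X^{n₀}, U·G + V·H ≡ X^κ mod X^{n₀−κ}, deg_Y U < deg_Y H and deg_Y V < deg_Y G. Let α ∈ K[[X]][Y] be the polynomial with X^κ·α = F − G·H (which exists since X^{n₀} divides F − G·H and n₀ > κ), and let Q, R be the quotient and remainder of the Euclidean division of U·α by the monic polynomial H in K[[X]][Y]. Define G̃ := G + α·V + Q·G and H̃ := H + R. Then H̃ is monic in Y of the same degree as H, G̃ ≡ G mod X^{n₀−κ}, H̃ ≡ H mod X^{n₀−κ}, and F ≡ G̃·H̃ mod X^{2(n₀−κ)}. -/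
/-!
Write `t = X^(n₀-κ)`. Since `X^κ α = F - G H` is divisible by `X^(n₀)`, `t` divides `α`, hence
also the quotient `Q` and the remainder `R` of `U α` by the monic `H`. Using `F = G H + X^κ α` and
`Q H + R = U α`, the error of the new factorisation is the exact identity
`F - G̃ H̃ = -α (U G + V H - X^κ) - (α V + Q G) R`, and each of the two products is divisible by `t²`.
-/

open Polynomial

namespace Polynomial

variable {R : Type*} [CommRing R]

theorem smul_divByMonic {q : R[X]} (hq : q.Monic) (c : R) (p : R[X]) :
    c • p /ₘ q = c • (p /ₘ q) := by
  nontriviality R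
  exact (div_modByMonic_unique (c • (p /ₘ q)) (c • (p %ₘ q)) hq
    ⟨by rw [mul_smul_comm, ← smul_add, modByMonic_add_div],
      (degree_smul_le _ _).trans_lt (degree_modByMonic_lt _ hq)⟩).1

theorem C_dvd_divByMonic {q p : R[X]} (hq : q.Monic) {c : R} (h : C c ∣ p) : C c ∣ p /ₘ q := by
  obtain ⟨p, rfl⟩ := h
  rw [← smul_eq_C_mul, smul_divByMonic hq, smul_eq_C_mul]
  exact dvd_mul_right _ _

theorem C_dvd_modByMonic {q p : R[X]} {c : R} (h : C c ∣ p) : C c ∣ p %ₘ q := by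
  obtain ⟨p, rfl⟩ := h
  rw [← smul_eq_C_mul, smul_modByMonic, smul_eq_C_mul]
  exact dvd_mul_right _ _

end Polynomial

theorem hensel_step_error_eq {A : Type*} [CommRing A] {F G H U V α Q R c : A}
    (hF : F = G * H + c * α) (hQR : Q * H + R = U * α) :
    F - (G + α * V + Q * G) * (H + R) = -(α * (U * G + V * H - c)) - (α * V + Q * G) * R := by
  linear_combination hF - G * hQR

theorem generalised_hensel_step_factors_general {K : Type*} [Field K] (κ n₀ : ℕ)
    (hn : 2 * κ < n₀)
    (F G H U V α : Polynomial (PowerSeries K)) (hH : H.Monic)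
    (hFGH : Polynomial.C ((PowerSeries.X : PowerSeries K) ^ n₀) ∣ F - G * H)
    (hUV : Polynomial.C ((PowerSeries.X : PowerSeries K) ^ (n₀ - κ)) ∣
      U * G + V * H - Polynomial.C ((PowerSeries.X : PowerSeries K) ^ κ))
    (hα : Polynomial.C ((PowerSeries.X : PowerSeries K) ^ κ) * α = F - G * H) :
    (H + (U * α) %ₘ H).Monic ∧
    (H + (U * α) %ₘ H).degree = H.degree ∧
    Polynomial.C ((PowerSeries.X : PowerSeries K) ^ (n₀ - κ)) ∣
      (G + α * V + ((U * α) /ₘ H) * G) - G ∧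
    Polynomial.C ((PowerSeries.X : PowerSeries K) ^ (n₀ - κ)) ∣
      (H + (U * α) %ₘ H) - H ∧
    Polynomial.C ((PowerSeries.X : PowerSeries K) ^ (2 * (n₀ - κ))) ∣
      F - (G + α * V + ((U * α) /ₘ H) * G) * (H + (U * α) %ₘ H) := by
  set t := C ((PowerSeries.X : PowerSeries K) ^ (n₀ - κ))
  have hαt : t ∣ α := by
    have hXκ : C (PowerSeries.X ^ κ : PowerSeries K) ≠ 0 := by
      simp [PowerSeries.X_ne_zero]
    rwa [← mul_dvd_mul_iff_left hXκ, hα, ← C_mul, ← pow_add, Nat.add_sub_cancel' (by omega)]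
  have hUαt : t ∣ U * α := dvd_mul_of_dvd_right hαt U
  have hQt : t ∣ (U * α) /ₘ H := C_dvd_divByMonic hH hUαt
  have hRt : t ∣ (U * α) %ₘ H := C_dvd_modByMonic hUαt
  have hΔGt : t ∣ α * V + ((U * α) /ₘ H) * G :=
    dvd_add (dvd_mul_of_dvd_left hαt V) (dvd_mul_of_dvd_left hQt G)
  have hRlt := degree_modByMonic_lt (U * α) hH
  refine ⟨hH.add_of_left hRlt, degree_add_eq_left_of_degree_lt hRlt, ?_, ?_, ?_⟩
  · rwa [add_assoc, add_sub_cancel_left]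
  · rwa [add_sub_cancel_left]
  · have htt : C ((PowerSeries.X : PowerSeries K) ^ (2 * (n₀ - κ))) = t * t := by
      rw [two_mul, pow_add, C_mul]
    have hF : F = G * H + C (PowerSeries.X ^ κ) * α := by
      rw [hα, add_sub_cancel]
    have hQR : (U * α) /ₘ H * H + (U * α) %ₘ H = U * α := by
      rw [mul_comm, add_comm, modByMonic_add_div]
    rw [htt, hensel_step_error_eq hF hQR]
    exact dvd_sub (dvd_neg.2 (mul_dvd_mul hαt hUV)) (mul_dvd_mul hΔGt hRt)

/-- Correctness of one step of the generalised Hensel lifting (factor update):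
with `α` such that `X^κ · α = F - G·H`, `Q, R` the quotient and remainder of `U·α`
by the monic `H`, and `G̃ = G + α·V + Q·G`, `H̃ = H + R`, the polynomial `H̃` is monic
of the same degree as `H`, `G̃ ≡ G`, `H̃ ≡ H (mod X^(n₀-κ))` and
`F ≡ G̃·H̃ (mod X^(2(n₀-κ)))`. -/
theorem generalised_hensel_step_factors {K : Type*} [Field K] (κ n₀ : ℕ)
    (hn : 2 * κ < n₀)
    (F G H U V α : Polynomial (PowerSeries K)) (hH : H.Monic)
    (hFGH : Polynomial.C ((PowerSeries.X : PowerSeries K) ^ n₀) ∣ F - G * H)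
    (hUV : Polynomial.C ((PowerSeries.X : PowerSeries K) ^ (n₀ - κ)) ∣
      U * G + V * H - Polynomial.C ((PowerSeries.X : PowerSeries K) ^ κ))
    (hdegU : U.degree < H.degree) (hdegV : V.degree < G.degree)
    (hα : Polynomial.C ((PowerSeries.X : PowerSeries K) ^ κ) * α = F - G * H) :
    (H + (U * α) %ₘ H).Monic ∧
    (H + (U * α) %ₘ H).degree = H.degree ∧
    Polynomial.C ((PowerSeries.X : PowerSeries K) ^ (n₀ - κ)) ∣
      (G + α * V + ((U * α) /ₘ H) * G) - G ∧
    Polynomial.C ((PowerSeries.X : PowerSeries K) ^ (n₀ - κ)) ∣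
      (H + (U * α) %ₘ H) - H ∧
    Polynomial.C ((PowerSeries.X : PowerSeries K) ^ (2 * (n₀ - κ))) ∣
      F - (G + α * V + ((U * α) /ₘ H) * G) * (H + (U * α) %ₘ H) :=
  generalised_hensel_step_factors_general κ n₀ hn F G H U V α hH hFGH hUV hα
end

section
/- Let K be a field, κ ∈ ℕ, and F, G, H, U, V ∈ K[[X]][Y] with H monic in Y, such that F ≡ G·H mod X^{2κ+1}, U·G + V·H ≡ X^κ mod X^{κ+1}, deg_Y U < deg_Y H and deg_Y V < deg_Y G. Then for every n ∈ ℕ there exist G̃, H̃ ∈ K[[X]][Y] with H̃ monic in Y of degree deg_Y H, such that G̃ ≡ G mod X^{κ+1}, H̃ ≡ H mod X^{κ+1}, and F ≡ G̃·H̃ mod X^{n+2κ}. Moreover, if G*, H* ∈ K[[X]][Y] with H* monic of degree deg_Y H satisfy G* ≡ G mod X^{κ+1}, H* ≡ H mod X^{κ+1} and F ≡ G*·H* mod X^{n+2κ}, then G̃ ≡ G* mod X^n and H̃ ≡ H* mod X^n. -/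
open Polynomial

/-!
Existence is a Newton iteration that gains one power of `X` per step. If `F ≡ G₁ H₁` modulo
`X ^ (j + κ)` with `j ≥ κ + 1`, write `F - G₁ H₁ = X ^ (j + κ) E`. The Bézout relation, with its
`Y`-part reduced modulo the monic `H₁`, solves `A H₁ + B G₁ ≡ X ^ κ E` modulo `X ^ (κ + 1)` with
`deg B < deg H₁`, and `(G₁ + X ^ j A, H₁ + X ^ j B)` is a factorisation modulo `X ^ (j + κ + 1)`,
since the quadratic error term is divisible by `X ^ (2 j)`.

For uniqueness, if `D H + G E ≡ 0` modulo `X ^ (κ + 1)` with `deg E < deg H`, multiplying by `U`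
gives `X ^ κ E + (U D - V E) H ≡ 0`, and uniqueness of division by the monic `H` forces `X ∣ E`
and then `X ∣ D`. Iterating, the differences of two lifts modulo `X ^ (n + 2κ)` are divisible by
`X ^ (n + κ)`.
-/

def HasBezoutRelation {A : Type*} [CommRing A] (c : A) (κ : ℕ) (G H : A) : Prop :=
  ∃ U V : A, c ^ (κ + 1) ∣ U * G + V * H - c ^ κ

theorem HasBezoutRelation.of_dvd_sub {A : Type*} [CommRing A] {c : A} {κ : ℕ} {G H G' H' : A}
    (h : HasBezoutRelation c κ G H) (hG : c ^ (κ + 1) ∣ G' - G) (hH : c ^ (κ + 1) ∣ H' - H) :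
    HasBezoutRelation c κ G' H' := by
  obtain ⟨U, V, hUV⟩ := h
  refine ⟨U, V, ?_⟩
  have : U * G' + V * H' - c ^ κ = (U * G + V * H - c ^ κ) + U * (G' - G) + V * (H' - H) := by
    ring
  rw [this]
  exact (hUV.add (hG.mul_left U)).add (hH.mul_left V)

namespace Polynomial

variable {R : Type*} [CommRing R]

theorem degree_C_mul_lt {a : R} {p q : R[X]} (h : p.degree < q.degree) :
    (C a * p).degree < q.degree := by
  rw [← smul_eq_C_mul]
  exact (degree_smul_le a p).trans_lt h

theorem Monic.C_dvd_add_mul_iff {a : R} {H E W : R[X]} (hH : H.Monic)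
    (hE : E.degree < H.degree) : C a ∣ E + W * H ↔ C a ∣ E ∧ C a ∣ W := by
  refine ⟨fun ⟨Z, hZ⟩ => ?_, fun ⟨hcE, hcW⟩ => hcE.add (hcW.mul_right H)⟩
  nontriviality R
  have hEW := div_modByMonic_unique (f := E + W * H) W E hH ⟨by ring, hE⟩
  have hZ' := div_modByMonic_unique (f := C a * Z) (C a * (Z /ₘ H)) (C a * (Z %ₘ H)) hH
    ⟨by linear_combination C a * modByMonic_add_div Z H,
      degree_C_mul_lt (degree_modByMonic_lt Z hH)⟩
  rw [hZ] at hEW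
  exact ⟨⟨_, hEW.2.symm.trans hZ'.2⟩, ⟨_, hEW.1.symm.trans hZ'.1⟩⟩

end Polynomial

section HenselLift

variable {R : Type*} [CommRing R]

def IsHenselLift (c : R[X]) (κ k : ℕ) (F G H G' H' : R[X]) : Prop :=
  H'.Monic ∧ H'.natDegree = H.natDegree ∧ c ^ (κ + 1) ∣ G' - G ∧ c ^ (κ + 1) ∣ H' - H ∧
    c ^ k ∣ F - G' * H'

theorem HasBezoutRelation.exists_mul_add_mul_eq_pow_mul_mod [Nontrivial R] {c G H : R[X]}
    {κ : ℕ} (hB : HasBezoutRelation c κ G H) (hH : H.Monic) (E : R[X]) :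
    ∃ A B : R[X], B.degree < H.degree ∧ c ^ (κ + 1) ∣ A * H + B * G - c ^ κ * E := by
  obtain ⟨U, V, hUV⟩ := hB
  refine ⟨V * E + (U * E /ₘ H) * G, U * E %ₘ H, degree_modByMonic_lt _ hH, ?_⟩
  have : (V * E + (U * E /ₘ H) * G) * H + (U * E %ₘ H) * G - c ^ κ * E =
      E * (U * G + V * H - c ^ κ) := by
    linear_combination G * modByMonic_add_div (U * E) H
  rw [this]
  exact hUV.mul_left E

theorem IsHenselLift.exists_succ [Nontrivial R] {r : R} {κ j : ℕ} {F G H G₁ H₁ : R[X]}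
    (hB : HasBezoutRelation (C r) κ G H) (h : IsHenselLift (C r) κ (j + κ) F G H G₁ H₁)
    (hj : κ + 1 ≤ j) : ∃ G₂ H₂ : R[X], IsHenselLift (C r) κ (j + κ + 1) F G H G₂ H₂ := by
  obtain ⟨hmon₁, hdeg₁, hG₁, hH₁, ⟨E, hE⟩⟩ := h
  obtain ⟨A, B, hBdeg, hAB⟩ :=
    (hB.of_dvd_sub hG₁ hH₁).exists_mul_add_mul_eq_pow_mul_mod hmon₁ E
  have hcorr : (C r ^ j * B).degree < H₁.degree := by
    rw [← C_pow]
    exact degree_C_mul_lt hBdeg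
  have hcj : C r ^ (κ + 1) ∣ C r ^ j := pow_dvd_pow _ hj
  refine ⟨G₁ + C r ^ j * A, H₁ + C r ^ j * B, hmon₁.add_of_left hcorr,
    (natDegree_add_eq_left_of_degree_lt hcorr).trans hdeg₁, ?_, ?_, ?_⟩
  · rw [add_sub_right_comm]
    exact hG₁.add (hcj.mul_right A)
  · rw [add_sub_right_comm]
    exact hH₁.add (hcj.mul_right B)
  · have : F - (G₁ + C r ^ j * A) * (H₁ + C r ^ j * B) =
        -(C r ^ j * (A * H₁ + B * G₁ - C r ^ κ * E)) - C r ^ (j + j) * (A * B) := by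
      rw [pow_add] at hE ⊢
      linear_combination hE
    rw [this]
    refine (dvd_neg.mpr ?_).sub ((pow_dvd_pow _ (by omega)).mul_right _)
    rw [add_assoc, pow_add]
    exact mul_dvd_mul_left _ hAB

theorem exists_isHenselLift [Nontrivial R] {r : R} {κ : ℕ} {F G H : R[X]}
    (hB : HasBezoutRelation (C r) κ G H) (hH : H.Monic) (hF : C r ^ (2 * κ + 1) ∣ F - G * H)
    (m : ℕ) : ∃ G' H' : R[X], IsHenselLift (C r) κ (m + 2 * κ + 1) F G H G' H' := by
  induction m with
  | zero => exact ⟨G, H, hH, rfl, by simp, by simp, by simpa using hF⟩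
  | succ m ih =>
    obtain ⟨G₁, H₁, h⟩ := ih
    rw [show m + 2 * κ + 1 = m + κ + 1 + κ by ring] at h
    rw [show m + 1 + 2 * κ + 1 = m + κ + 1 + κ + 1 by ring]
    exact h.exists_succ hB (by omega)

variable [IsDomain R] {r : R} {κ : ℕ}

theorem HasBezoutRelation.dvd_of_pow_succ_dvd (hr : r ≠ 0) {G H D E : R[X]}
    (hB : HasBezoutRelation (C r) κ G H) (hH : H.Monic) (hE : E.degree < H.degree)
    (h : C r ^ (κ + 1) ∣ D * H + G * E) : C r ∣ D ∧ C r ∣ E := by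
  obtain ⟨U, V, hUV⟩ := hB
  have hc : C r ^ κ ≠ 0 := pow_ne_zero _ (C_ne_zero.mpr hr)
  have hmul : C r ^ (κ + 1) ∣ C r ^ κ * E + (U * D - V * E) * H := by
    have : C r ^ κ * E + (U * D - V * E) * H =
        U * (D * H + G * E) - E * (U * G + V * H - C r ^ κ) := by
      ring
    rw [this]
    exact (h.mul_left U).sub (hUV.mul_left E)
  rw [← C_pow, hH.C_dvd_add_mul_iff (by rw [← C_pow]; exact degree_C_mul_lt hE), C_pow] at hmul
  obtain ⟨hcE, hW⟩ := hmul
  have hcD : C r ^ (κ + 1) ∣ C r ^ κ * D := by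
    have : C r ^ κ * D =
        G * (U * D - V * E) + V * (D * H + G * E) - D * (U * G + V * H - C r ^ κ) := by
      ring
    rw [this]
    exact ((hW.mul_left G).add (h.mul_left V)).sub (hUV.mul_left D)
  rw [pow_succ] at hcE hcD
  exact ⟨(mul_dvd_mul_iff_left hc).mp hcD, (mul_dvd_mul_iff_left hc).mp hcE⟩

theorem HasBezoutRelation.pow_dvd_of_pow_add_dvd (hr : r ≠ 0) {G H D E : R[X]}
    (hB : HasBezoutRelation (C r) κ G H) (hH : H.Monic) (hE : E.degree < H.degree) (j : ℕ)
    (h : C r ^ (j + κ) ∣ D * H + G * E) : C r ^ j ∣ D ∧ C r ^ j ∣ E := by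
  induction j with
  | zero => simp
  | succ j ih =>
    obtain ⟨⟨D₁, rfl⟩, ⟨E₁, rfl⟩⟩ := ih ((pow_dvd_pow _ (by omega)).trans h)
    have hc : C r ^ j ≠ 0 := pow_ne_zero _ (C_ne_zero.mpr hr)
    have hE₁ : E₁.degree < H.degree := by
      rwa [← C_pow, degree_C_mul (pow_ne_zero _ hr)] at hE
    have h₁ : C r ^ (κ + 1) ∣ D₁ * H + G * E₁ := by
      rw [← mul_dvd_mul_iff_left hc, ← pow_add]
      convert h using 1 <;> ring
    obtain ⟨hcD₁, hcE₁⟩ := hB.dvd_of_pow_succ_dvd hr hH hE₁ h₁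
    rw [pow_succ]
    exact ⟨mul_dvd_mul_left _ hcD₁, mul_dvd_mul_left _ hcE₁⟩

theorem IsHenselLift.pow_dvd_sub (hr : r ≠ 0) {n : ℕ} {F G H G₁ H₁ G₂ H₂ : R[X]}
    (hB : HasBezoutRelation (C r) κ G H) (h₁ : IsHenselLift (C r) κ (n + 2 * κ) F G H G₁ H₁)
    (h₂ : IsHenselLift (C r) κ (n + 2 * κ) F G H G₂ H₂) :
    C r ^ n ∣ G₁ - G₂ ∧ C r ^ n ∣ H₁ - H₂ := by
  obtain ⟨hmon₁, hdeg₁, -, hH₁, hF₁⟩ := h₁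
  obtain ⟨hmon₂, hdeg₂, hG₂, -, hF₂⟩ := h₂
  have hdeg : (H₁ - H₂).degree < H₁.degree := by
    refine degree_sub_lt_left ?_ hmon₁.ne_zero (by rw [hmon₁.leadingCoeff, hmon₂.leadingCoeff])
    rw [degree_eq_natDegree hmon₁.ne_zero, degree_eq_natDegree hmon₂.ne_zero, hdeg₁, hdeg₂]
  have hprod : C r ^ (n + κ + κ) ∣ (G₁ - G₂) * H₁ + G₂ * (H₁ - H₂) := by
    have : (G₁ - G₂) * H₁ + G₂ * (H₁ - H₂) = (F - G₂ * H₂) - (F - G₁ * H₁) := by ring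
    rw [this, show n + κ + κ = n + 2 * κ by ring]
    exact hF₂.sub hF₁
  obtain ⟨hG, hH⟩ := (hB.of_dvd_sub hG₂ hH₁).pow_dvd_of_pow_add_dvd hr hmon₁ hdeg _ hprod
  exact ⟨(pow_dvd_pow _ (by omega)).trans hG, (pow_dvd_pow _ (by omega)).trans hH⟩

end HenselLift

theorem generalised_hensel_lifting_general {K : Type*} [Field K] (κ : ℕ)
    (F G H U V : Polynomial (PowerSeries K)) (hH : H.Monic)
    (hFGH : Polynomial.C ((PowerSeries.X : PowerSeries K) ^ (2 * κ + 1)) ∣ F - G * H)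
    (hUV : Polynomial.C ((PowerSeries.X : PowerSeries K) ^ (κ + 1)) ∣
      U * G + V * H - Polynomial.C ((PowerSeries.X : PowerSeries K) ^ κ)) :
    ∀ n : ℕ, ∃ G' H' : Polynomial (PowerSeries K),
      H'.Monic ∧ H'.natDegree = H.natDegree ∧
      Polynomial.C ((PowerSeries.X : PowerSeries K) ^ (κ + 1)) ∣ G' - G ∧
      Polynomial.C ((PowerSeries.X : PowerSeries K) ^ (κ + 1)) ∣ H' - H ∧
      Polynomial.C ((PowerSeries.X : PowerSeries K) ^ (n + 2 * κ)) ∣ F - G' * H' ∧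
      ∀ Gs Hs : Polynomial (PowerSeries K), Hs.Monic → Hs.natDegree = H.natDegree →
        Polynomial.C ((PowerSeries.X : PowerSeries K) ^ (κ + 1)) ∣ Gs - G →
        Polynomial.C ((PowerSeries.X : PowerSeries K) ^ (κ + 1)) ∣ Hs - H →
        Polynomial.C ((PowerSeries.X : PowerSeries K) ^ (n + 2 * κ)) ∣ F - Gs * Hs →
        Polynomial.C ((PowerSeries.X : PowerSeries K) ^ n) ∣ G' - Gs ∧
        Polynomial.C ((PowerSeries.X : PowerSeries K) ^ n) ∣ H' - Hs := by
  simp only [map_pow] at hFGH hUV ⊢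
  have hB : HasBezoutRelation (C PowerSeries.X) κ G H := ⟨U, V, hUV⟩
  intro n
  obtain ⟨G', H', hmon, hdeg, hG, hH', hF⟩ := exists_isHenselLift hB hH hFGH n
  have hlift : IsHenselLift (C PowerSeries.X) κ (n + 2 * κ) F G H G' H' :=
    ⟨hmon, hdeg, hG, hH', (pow_dvd_pow _ (by omega)).trans hF⟩
  exact ⟨G', H', hlift.1, hlift.2.1, hG, hH', hlift.2.2.2.2,
    fun Gs Hs hmons hdegs hGs hHs hFs =>
      hlift.pow_dvd_sub PowerSeries.X_ne_zero hB ⟨hmons, hdegs, hGs, hHs, hFs⟩⟩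

/-- Generalised Hensel lifting: a factorisation `F ≡ G·H (mod X^(2κ+1))` with a
generalised Bézout relation `U·G + V·H ≡ X^κ (mod X^(κ+1))` lifts to arbitrary
precision, uniquely. -/
theorem generalised_hensel_lifting {K : Type*} [Field K] (κ : ℕ)
    (F G H U V : Polynomial (PowerSeries K)) (hH : H.Monic)
    (hFGH : Polynomial.C ((PowerSeries.X : PowerSeries K) ^ (2 * κ + 1)) ∣ F - G * H)
    (hUV : Polynomial.C ((PowerSeries.X : PowerSeries K) ^ (κ + 1)) ∣
      U * G + V * H - Polynomial.C ((PowerSeries.X : PowerSeries K) ^ κ))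
    (hdegU : U.degree < H.degree) (hdegV : V.degree < G.degree) :
    ∀ n : ℕ, ∃ G' H' : Polynomial (PowerSeries K),
      H'.Monic ∧ H'.natDegree = H.natDegree ∧
      Polynomial.C ((PowerSeries.X : PowerSeries K) ^ (κ + 1)) ∣ G' - G ∧
      Polynomial.C ((PowerSeries.X : PowerSeries K) ^ (κ + 1)) ∣ H' - H ∧
      Polynomial.C ((PowerSeries.X : PowerSeries K) ^ (n + 2 * κ)) ∣ F - G' * H' ∧
      ∀ Gs Hs : Polynomial (PowerSeries K), Hs.Monic → Hs.natDegree = H.natDegree →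
        Polynomial.C ((PowerSeries.X : PowerSeries K) ^ (κ + 1)) ∣ Gs - G →
        Polynomial.C ((PowerSeries.X : PowerSeries K) ^ (κ + 1)) ∣ Hs - H →
        Polynomial.C ((PowerSeries.X : PowerSeries K) ^ (n + 2 * κ)) ∣ F - Gs * Hs →
        Polynomial.C ((PowerSeries.X : PowerSeries K) ^ n) ∣ G' - Gs ∧
        Polynomial.C ((PowerSeries.X : PowerSeries K) ^ n) ∣ H' - Hs :=
  generalised_hensel_lifting_general κ F G H U V hH hFGH hUV
end

section
/- Let K be a field and F ∈ K[[X]][Y] a nonzero polynomial not divisible by X, i.e. the polynomial F(0,Y) ∈ K[Y] obtained by taking the constant term of each coefficient of F is nonzero. Then there exist u ∈ K[[X]] and F₀, F_∞ ∈ K[[X]][Y] such that F = u·F₀·F_∞, F₀ is monic in Y, F_∞(0,Y) = 1 (the constant-term polynomial of F_∞ is the constant polynomial 1), and u has nonzero constant term (so u is a unit of K[[X]]). -/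
/-!
Write `F = ∑ₖ Xᵏ fₖ` with `fₖ ∈ K[Y]`, i.e. view `K[[X]][Y]` inside `K[Y][[X]]`. After dividing
by the leading coefficient `c` of `F(0,Y)`, `f₀ = g₀` is monic of degree `n`. We look for
`G = ∑ Xᵏ Gₖ` and `H = ∑ Xᵏ Hₖ` with `G₀ = g₀`, `H₀ = 1`, `deg Gₖ < n` for `k ≥ 1` and `G H = F`.
Comparing `Xᵏ`-coefficients gives `Gₖ + g₀ Hₖ = fₖ - ∑_{0<i<k} Gᵢ Hₖ₋ᵢ`, whose right-hand side
is already known, so division with remainder by `g₀` determines `Gₖ` and `Hₖ` (Hensel lifting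
of `f₀ = g₀ · 1`). Inductively `deg Hₖ ≤ deg_Y F - n`, so `G` and `H` are polynomials in `Y`;
`G` is monic since its `Yⁿ`-coefficient is `1 + 0·X + ⋯`, and `H(0,Y) = 1`. Then `F = c G H`.
-/

open Polynomial

namespace Polynomial

variable {R : Type*} [CommSemiring R]

noncomputable def toPowerSeriesPolynomial : (PowerSeries R)[X] →+* PowerSeries R[X] :=
  eval₂RingHom (PowerSeries.map C) (PowerSeries.C X)

theorem coeff_coeff_toPowerSeriesPolynomial (F : (PowerSeries R)[X]) (k j : ℕ) :
    (PowerSeries.coeff k (toPowerSeriesPolynomial F)).coeff j =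
      PowerSeries.coeff k (F.coeff j) := by
  induction F using Polynomial.induction_on' with
  | add p q hp hq => simp [hp, hq]
  | monomial n a =>
    simp only [toPowerSeriesPolynomial, coe_eval₂RingHom, eval₂_monomial, ← map_pow,
      PowerSeries.coeff_mul_C, PowerSeries.coeff_map, coeff_C_mul_X_pow, coeff_monomial]
    split_ifs <;> simp_all

theorem toPowerSeriesPolynomial_injective :
    Function.Injective (toPowerSeriesPolynomial (R := R)) := fun F G h =>
  Polynomial.ext fun j => PowerSeries.ext fun k => by
    rw [← coeff_coeff_toPowerSeriesPolynomial, h, coeff_coeff_toPowerSeriesPolynomial]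

theorem natDegree_coeff_toPowerSeriesPolynomial_le (F : (PowerSeries R)[X]) (k : ℕ) :
    (PowerSeries.coeff k (toPowerSeriesPolynomial F)).natDegree ≤ F.natDegree :=
  natDegree_le_iff_coeff_eq_zero.mpr fun j hj => by
    rw [coeff_coeff_toPowerSeriesPolynomial, coeff_eq_zero_of_natDegree_lt hj, map_zero]

theorem coeff_zero_toPowerSeriesPolynomial (F : (PowerSeries R)[X]) :
    PowerSeries.coeff 0 (toPowerSeriesPolynomial F) = F.map PowerSeries.constantCoeff := by
  ext j
  rw [coeff_coeff_toPowerSeriesPolynomial, coeff_map, PowerSeries.coeff_zero_eq_constantCoeff]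

theorem exists_toPowerSeriesPolynomial_eq {G : PowerSeries R[X]} {m : ℕ}
    (hG : ∀ k, (PowerSeries.coeff k G).natDegree ≤ m) :
    ∃ F : (PowerSeries R)[X], toPowerSeriesPolynomial F = G := by
  refine ⟨∑ j ∈ Finset.range (m + 1),
    monomial j (PowerSeries.mk fun k => (PowerSeries.coeff k G).coeff j), ?_⟩
  ext k j
  rw [coeff_coeff_toPowerSeriesPolynomial, finsetSum_coeff]
  simp only [coeff_monomial, Finset.sum_ite_eq', Finset.mem_range]
  split_ifs with hj
  · rw [PowerSeries.coeff_mk]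
  · rw [map_zero, coeff_eq_zero_of_natDegree_lt ((hG k).trans_lt (by omega))]

theorem monic_of_toPowerSeriesPolynomial {F : (PowerSeries R)[X]}
    (hF₀ : (PowerSeries.coeff 0 (toPowerSeriesPolynomial F)).Monic)
    (hF : ∀ k ≠ 0, (PowerSeries.coeff k (toPowerSeriesPolynomial F)).degree <
      (PowerSeries.coeff 0 (toPowerSeriesPolynomial F)).degree) :
    F.Monic := by
  set g₀ := PowerSeries.coeff 0 (toPowerSeriesPolynomial F)
  have hcoeff (k : ℕ) : (PowerSeries.coeff k (toPowerSeriesPolynomial F)).coeff g₀.natDegree =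
      PowerSeries.coeff k (1 : PowerSeries R) := by
    rcases eq_or_ne k 0 with rfl | hk
    · rw [hF₀.coeff_natDegree, PowerSeries.coeff_zero_one]
    · rw [coeff_eq_zero_of_degree_lt ((hF k hk).trans_le degree_le_natDegree),
        PowerSeries.coeff_one, if_neg hk]
  have hdeg (k : ℕ) :
      (PowerSeries.coeff k (toPowerSeriesPolynomial F)).natDegree ≤ g₀.natDegree := by
    rcases eq_or_ne k 0 with rfl | hk
    · rfl
    · exact natDegree_le_natDegree (hF k hk).le
  refine monic_of_natDegree_le_of_coeff_eq_one g₀.natDegree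
    (natDegree_le_iff_coeff_eq_zero.mpr fun j hj => PowerSeries.ext fun k => ?_)
    (PowerSeries.ext fun k => by rw [← coeff_coeff_toPowerSeriesPolynomial, hcoeff])
  rw [← coeff_coeff_toPowerSeriesPolynomial, map_zero,
    coeff_eq_zero_of_natDegree_lt ((hdeg k).trans_lt hj)]

end Polynomial

namespace PowerSeries

variable {R : Type*} [CommRing R] (P : PowerSeries R[X])

-- The sum runs over `Fin k` so that termination is visible from `i < k`.
noncomputable def henselCoeffs : ℕ → R[X] × R[X]
  | 0 => (coeff 0 P, 1)
  | k + 1 =>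
    let r := coeff (k + 1) P - ∑ i : Fin k, (henselCoeffs (i + 1)).1 * (henselCoeffs (k - i)).2
    (r %ₘ coeff 0 P, r /ₘ coeff 0 P)
  decreasing_by all_goals omega

noncomputable def henselDefect (k : ℕ) : R[X] :=
  coeff (k + 1) P -
    ∑ i ∈ Finset.range k, (henselCoeffs P (i + 1)).1 * (henselCoeffs P (k - i)).2

theorem henselCoeffs_zero : henselCoeffs P 0 = (coeff 0 P, 1) := by
  rw [henselCoeffs]

theorem henselCoeffs_succ (k : ℕ) :
    henselCoeffs P (k + 1) =
      (henselDefect P k %ₘ coeff 0 P, henselDefect P k /ₘ coeff 0 P) := by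
  rw [henselCoeffs, henselDefect,
    Finset.sum_range fun i => (henselCoeffs P (i + 1)).1 * (henselCoeffs P (k - i)).2]

noncomputable def henselLeft : PowerSeries R[X] := mk fun k => (henselCoeffs P k).1

noncomputable def henselRight : PowerSeries R[X] := mk fun k => (henselCoeffs P k).2

@[simp] theorem coeff_zero_henselLeft : coeff 0 (henselLeft P) = coeff 0 P := by
  rw [henselLeft, coeff_mk, henselCoeffs_zero]

@[simp] theorem coeff_zero_henselRight : coeff 0 (henselRight P) = 1 := by
  rw [henselRight, coeff_mk, henselCoeffs_zero]

theorem henselLeft_mul_henselRight : henselLeft P * henselRight P = P := by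
  ext1 k
  rw [coeff_mul, Finset.Nat.sum_antidiagonal_eq_sum_range_succ fun i j =>
    coeff i (henselLeft P) * coeff j (henselRight P)]
  simp only [henselLeft, henselRight, coeff_mk]
  cases k with
  | zero => simp [henselCoeffs_zero]
  | succ k =>
    rw [Finset.sum_range_succ', Finset.sum_range_succ, henselCoeffs_zero, henselCoeffs_succ,
      Nat.sub_self, henselCoeffs_zero, Nat.sub_zero, henselCoeffs_succ]
    simp only [Nat.succ_sub_succ, mul_one]
    rw [add_assoc, modByMonic_add_div, henselDefect]
    ring

theorem natDegree_coeff_henselLeft_le (hP : (coeff 0 P).Monic) (k : ℕ) :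
    (coeff k (henselLeft P)).natDegree ≤ (coeff 0 P).natDegree := by
  rw [henselLeft, coeff_mk]
  cases k with
  | zero => rw [henselCoeffs_zero]
  | succ k => rw [henselCoeffs_succ]; exact natDegree_modByMonic_le _ hP

theorem degree_coeff_henselLeft_lt [Nontrivial R] (hP : (coeff 0 P).Monic) {k : ℕ}
    (hk : k ≠ 0) :
    (coeff k (henselLeft P)).degree < (coeff 0 P).degree := by
  obtain ⟨k, rfl⟩ := Nat.exists_eq_succ_of_ne_zero hk
  rw [henselLeft, coeff_mk, henselCoeffs_succ]
  exact degree_modByMonic_lt _ hP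

theorem natDegree_coeff_henselRight_le (hP : (coeff 0 P).Monic) {d : ℕ}
    (hd : ∀ k, (coeff k P).natDegree ≤ d) (k : ℕ) :
    (coeff k (henselRight P)).natDegree ≤ d - (coeff 0 P).natDegree := by
  induction k using Nat.strong_induction_on with
  | _ k ih =>
    rw [henselRight, coeff_mk]
    cases k with
    | zero => simp [henselCoeffs_zero]
    | succ k =>
      have hdefect : (henselDefect P k).natDegree ≤ d := by
        refine (natDegree_sub_le _ _).trans (max_le (hd _) ?_)
        refine natDegree_sum_le_of_forall_le _ _ fun i hi => natDegree_mul_le.trans ?_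
        have hG := natDegree_coeff_henselLeft_le P hP (i + 1)
        have hH := ih (k - i) (by omega)
        have hn := hd 0
        simp only [henselLeft, henselRight, coeff_mk] at hG hH
        omega
      rw [henselCoeffs_succ, natDegree_divByMonic _ hP]
      omega

end PowerSeries

theorem monic_times_infinity_factorisation_general {K : Type*} [Field K]
    (F : Polynomial (PowerSeries K))
    (hF : F.map (PowerSeries.constantCoeff (R := K)) ≠ 0) :
    ∃ (u : PowerSeries K) (F₀ Finf : Polynomial (PowerSeries K)),
      F = Polynomial.C u * F₀ * Finf ∧
      F₀.Monic ∧
      Finf.map (PowerSeries.constantCoeff (R := K)) = 1 ∧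
      PowerSeries.constantCoeff (R := K) u ≠ 0 := by
  set c := (F.map PowerSeries.constantCoeff).leadingCoeff
  have hc : c ≠ 0 := leadingCoeff_ne_zero.mpr hF
  set P := toPowerSeriesPolynomial (Polynomial.C (PowerSeries.C c⁻¹) * F)
  have hP : (PowerSeries.coeff 0 P).Monic := by
    rw [coeff_zero_toPowerSeriesPolynomial, Polynomial.map_mul, map_C, PowerSeries.constantCoeff_C]
    exact monic_C_mul_of_mul_leadingCoeff_eq_one (inv_mul_cancel₀ hc)
  obtain ⟨F₀, hF₀⟩ :=
    exists_toPowerSeriesPolynomial_eq (PowerSeries.natDegree_coeff_henselLeft_le P hP)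
  obtain ⟨Finf, hFinf⟩ := exists_toPowerSeriesPolynomial_eq
    (PowerSeries.natDegree_coeff_henselRight_le P hP (natDegree_coeff_toPowerSeriesPolynomial_le _))
  have hfactor : F₀ * Finf = Polynomial.C (PowerSeries.C c⁻¹) * F :=
    toPowerSeriesPolynomial_injective <| by
      rw [map_mul, hF₀, hFinf, PowerSeries.henselLeft_mul_henselRight]
  refine ⟨PowerSeries.C c, F₀, Finf, ?_, ?_, ?_, by rwa [PowerSeries.constantCoeff_C]⟩
  · rw [mul_assoc, hfactor, ← mul_assoc, ← Polynomial.C_mul, ← map_mul, mul_inv_cancel₀ hc,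
      map_one, Polynomial.C_1, one_mul]
  · refine monic_of_toPowerSeriesPolynomial ?_ fun k hk => ?_ <;>
      rw [hF₀, PowerSeries.coeff_zero_henselLeft]
    exacts [hP, PowerSeries.degree_coeff_henselLeft_lt P hP hk]
  · rw [← coeff_zero_toPowerSeriesPolynomial, hFinf, PowerSeries.coeff_zero_henselRight]

/-- Splitting off the roots at infinity: a nonzero `F ∈ K[[X]][Y]` not divisible by
`X` factors as `F = u·F₀·F_∞` with `F₀` monic in `Y`, `F_∞(0,Y) = 1` and `u ∈ K[[X]]`
a unit (nonzero constant term). -/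
theorem monic_times_infinity_factorisation {K : Type*} [Field K]
    (F : Polynomial (PowerSeries K)) (hF0 : F ≠ 0)
    (hF : F.map (PowerSeries.constantCoeff (R := K)) ≠ 0) :
    ∃ (u : PowerSeries K) (F₀ Finf : Polynomial (PowerSeries K)),
      F = Polynomial.C u * F₀ * Finf ∧
      F₀.Monic ∧
      Finf.map (PowerSeries.constantCoeff (R := K)) = 1 ∧
      PowerSeries.constantCoeff (R := K) u ≠ 0 :=
  monic_times_infinity_factorisation_general F hF
end
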